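/- Let s be an even positive integer and let v₁, w₁ ∈ V be vectors with J^s v₁ = 0, J^s w₁ = 0, and ⟨J^{s−1}v₁, w₁⟩ = 1. Then the subspace spanned by v₁, Jv₁, ..., J^{s−1}v₁, w₁, Jw₁, ..., J^{s−1}w₁ is J-invariant, has dimension 2s, and the form ⟨·,·⟩ is nondegenerate on it. -/
import Mathlib

section Aux

variable {V : Type*} [AddCommGroup V] [Module ℝ V]
variable (B : LinearMap.BilinForm ℝ V) (J : Module.End ℝ V)

private lemma aux_pow (hskew : ∀ x y, B (J x) y = - B x (J y)) :
    ∀ (k : ℕ) (x y : V), B ((J ^ k) x) y = (-1 : ℝ) ^ k * B x ((J ^ k) y) := by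
  intro k
  induction k with
  | zero => intro x y; simp
  | succ n ih =>
    intro x y
    have h1 : (J ^ (n + 1)) x = (J ^ n) (J x) := by rw [pow_succ]; rfl
    have h2 : (J ^ (n + 1)) y = J ((J ^ n) y) := by rw [pow_succ']; rfl
    rw [h1, ih (J x) y, hskew, ← h2, pow_succ]
    ring

private lemma aux_pow' (hskew : ∀ x y, B (J x) y = - B x (J y)) (k : ℕ) (x y : V) :
    B x ((J ^ k) y) = (-1 : ℝ) ^ k * B ((J ^ k) x) y := by
  rw [aux_pow B J hskew k x y, ← mul_assoc, ← pow_add,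
    Even.neg_one_pow ⟨k, rfl⟩, one_mul]

private lemma aux_comb (hskew : ∀ x y, B (J x) y = - B x (J y)) (a b : ℕ) (x y : V) :
    B ((J ^ a) x) ((J ^ b) y) = (-1 : ℝ) ^ b * B ((J ^ (a + b)) x) y := by
  have h : (J ^ b) ((J ^ a) x) = (J ^ (a + b)) x := by
    rw [add_comm, pow_add]; rfl
  rw [aux_pow' B J hskew b, h]

private lemma aux_odd (hsymm : ∀ x y, B x y = B y x)
    (hskew : ∀ x y, B (J x) y = - B x (J y)) (k : ℕ) (hk : Odd k) (x : V) :
    B ((J ^ k) x) x = 0 := by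
  have h := aux_pow B J hskew k x x
  rw [hsymm x ((J ^ k) x), hk.neg_one_pow] at h
  linarith

private lemma aux_zero (hskew : ∀ x y, B (J x) y = - B x (J y)) (s p q : ℕ)
    (x y : V) (hx : (J ^ s) x = 0) (hpq : s ≤ p + q) :
    B ((J ^ p) x) ((J ^ q) y) = 0 := by
  rw [aux_comb B J hskew]
  have h : (J ^ (p + q)) x = 0 := by
    have e : p + q = (p + q - s) + s := by omega
    rw [e, pow_add, Module.End.mul_apply, hx, map_zero]
  rw [h]
  simp

private lemma aux_self (hsymm : ∀ x y, B x y = B y x)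
    (hskew : ∀ x y, B (J x) y = - B x (J y)) (s : ℕ) (hs : 0 < s) (hseven : Even s)
    (p q : ℕ) (x : V) (hx : (J ^ s) x = 0) (hpq : s - 1 ≤ p + q) :
    B ((J ^ p) x) ((J ^ q) x) = 0 := by
  rcases Nat.lt_or_ge (p + q) s with hlt | hge
  · have e : p + q = s - 1 := by omega
    have hodd : Odd (s - 1) := by
      obtain ⟨t, ht⟩ := hseven
      exact ⟨t - 1, by omega⟩
    rw [aux_comb B J hskew, e, aux_odd B J hsymm hskew _ hodd x, mul_zero]
  · exact aux_zero B J hskew s p q x x hx hge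

private lemma aux_kill (hsymm : ∀ x y, B x y = B y x)
    (hskew : ∀ x y, B (J x) y = - B x (J y))
    (s : ℕ) (hs : 0 < s) (hseven : Even s) (v₁ w₁ : V)
    (hv : (J ^ s) v₁ = 0) (hw : (J ^ s) w₁ = 0)
    (hpair : B ((J ^ (s - 1)) v₁) w₁ = 1)
    (a b : Fin s → ℝ)
    (h : ∀ k : ℕ, k < s →
      B (∑ i : Fin s, (a i • (J ^ (i : ℕ)) v₁ + b i • (J ^ (i : ℕ)) w₁)) ((J ^ k) v₁) = 0 ∧
      B (∑ i : Fin s, (a i • (J ^ (i : ℕ)) v₁ + b i • (J ^ (i : ℕ)) w₁)) ((J ^ k) w₁) = 0) :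
    ∀ i, a i = 0 ∧ b i = 0 := by
  suffices H : ∀ m : ℕ, ∀ i : Fin s, (i : ℕ) = m → a i = 0 ∧ b i = 0 by
    exact fun i => H (i : ℕ) i rfl
  intro m
  induction m using Nat.strong_induction_on with
  | _ m ih =>
  intro i him
  have hms : m < s := him ▸ i.isLt
  have hprev : ∀ j : Fin s, (j : ℕ) < m → a j = 0 ∧ b j = 0 := fun j hj => ih _ hj j rfl
  set k := s - 1 - m with hkdef
  have hks : k < s := by omega
  have hmk : m + k = s - 1 := by omega
  have hne : ((-1 : ℝ)) ^ k ≠ 0 := pow_ne_zero _ (by norm_num)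
  -- expand the two linear equations
  have h1 := (h k hks).2
  have h2 := (h k hks).1
  simp only [map_sum, map_add, map_smul, LinearMap.sum_apply, LinearMap.add_apply,
    LinearMap.smul_apply, smul_eq_mul] at h1 h2
  -- first: a i = 0 using pairing against J^k w₁
  have ha : a i = 0 := by
    have hsum : ∑ j : Fin s,
        (a j * B ((J ^ (j : ℕ)) v₁) ((J ^ k) w₁) + b j * B ((J ^ (j : ℕ)) w₁) ((J ^ k) w₁))
        = a i * B ((J ^ (i : ℕ)) v₁) ((J ^ k) w₁)
          + b i * B ((J ^ (i : ℕ)) w₁) ((J ^ k) w₁) := by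
      refine Finset.sum_eq_single_of_mem i (Finset.mem_univ i) ?_
      intro j _ hj
      rcases Nat.lt_or_ge (j : ℕ) m with hjm | hjm
      · rw [(hprev j hjm).1, (hprev j hjm).2]; ring
      · have hj' : m < (j : ℕ) := lt_of_le_of_ne hjm fun e => hj (Fin.ext (by omega))
        rw [aux_zero B J hskew s _ _ v₁ w₁ hv (by omega),
          aux_zero B J hskew s _ _ w₁ w₁ hw (by omega)]
        ring
    rw [hsum] at h1
    rw [him, aux_comb B J hskew, hmk, hpair,
      aux_self B J hsymm hskew s hs hseven _ _ w₁ hw (by omega)] at h1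
    have h1' : a i * (-1 : ℝ) ^ k = 0 := by linarith
    exact (mul_eq_zero.mp h1').resolve_right hne
  refine ⟨ha, ?_⟩
  -- second: b i = 0 using pairing against J^k v₁
  have hsum : ∑ j : Fin s,
      (a j * B ((J ^ (j : ℕ)) v₁) ((J ^ k) v₁) + b j * B ((J ^ (j : ℕ)) w₁) ((J ^ k) v₁))
      = a i * B ((J ^ (i : ℕ)) v₁) ((J ^ k) v₁)
        + b i * B ((J ^ (i : ℕ)) w₁) ((J ^ k) v₁) := by
    refine Finset.sum_eq_single_of_mem i (Finset.mem_univ i) ?_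
    intro j _ hj
    rcases Nat.lt_or_ge (j : ℕ) m with hjm | hjm
    · rw [(hprev j hjm).1, (hprev j hjm).2]; ring
    · have hj' : m < (j : ℕ) := lt_of_le_of_ne hjm fun e => hj (Fin.ext (by omega))
      rw [aux_self B J hsymm hskew s hs hseven _ _ v₁ hv (by omega),
        aux_zero B J hskew s _ _ w₁ v₁ hw (by omega)]
      ring
  rw [hsum] at h2
  have hval : B ((J ^ m) w₁) ((J ^ k) v₁) = (-1 : ℝ) ^ k * (-1 : ℝ) ^ (s - 1) := by
    rw [aux_comb B J hskew, hmk]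
    congr 1
    rw [aux_pow B J hskew, hsymm w₁, hpair, mul_one]
  rw [him, aux_self B J hsymm hskew s hs hseven _ _ v₁ hv (by omega), hval] at h2
  have hodd : Odd (s - 1) := by
    obtain ⟨t, ht⟩ := hseven
    exact ⟨t - 1, by omega⟩
  rw [hodd.neg_one_pow] at h2
  have h2' : b i * (-1 : ℝ) ^ k = 0 := by
    rw [mul_comm] at h2 ⊢
    nlinarith [h2]
  exact (mul_eq_zero.mp h2').resolve_right hne

end Aux

/-- Stmt 18: For even s, if J^s v₁ = J^s w₁ = 0 and ⟨J^{s−1}v₁, w₁⟩ = 1, then the span of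
v₁, Jv₁, …, J^{s−1}v₁, w₁, Jw₁, …, J^{s−1}w₁ is J-invariant, 2s-dimensional, and B is
nondegenerate on it. -/
theorem stmt_18 {V : Type*} [AddCommGroup V] [Module ℝ V] [FiniteDimensional ℝ V]
    (B : LinearMap.BilinForm ℝ V) (hsymm : ∀ x y, B x y = B y x)
    (hnd : B.Nondegenerate)
    (J : Module.End ℝ V) (hskew : ∀ x y, B (J x) y = - B x (J y))
    (s : ℕ) (hs : 0 < s) (hseven : Even s) (v₁ w₁ : V)
    (hv : (J ^ s) v₁ = 0) (hw : (J ^ s) w₁ = 0)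
    (hpair : B ((J ^ (s - 1)) v₁) w₁ = 1) :
    let W := Submodule.span ℝ
      (Set.range (fun i : Fin s ⊕ Fin s =>
        Sum.elim (fun i : Fin s => (J ^ (i : ℕ)) v₁) (fun i : Fin s => (J ^ (i : ℕ)) w₁) i));
    (∀ y ∈ W, J y ∈ W) ∧
    Module.finrank ℝ W = 2 * s ∧
    (∀ y ∈ W, y ≠ 0 → ∃ z ∈ W, B y z ≠ 0) := by
  intro W
  set f : Fin s ⊕ Fin s → V := fun i =>
    Sum.elim (fun i : Fin s => (J ^ (i : ℕ)) v₁) (fun i : Fin s => (J ^ (i : ℕ)) w₁) i with hf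
  have hWf : W = Submodule.span ℝ (Set.range f) := rfl
  -- every power applied to v₁/w₁ lies in W
  have hgen : ∀ k : ℕ, (J ^ k) v₁ ∈ W ∧ (J ^ k) w₁ ∈ W := by
    intro k
    rcases Nat.lt_or_ge k s with hk | hk
    · constructor
      · exact Submodule.subset_span ⟨Sum.inl ⟨k, hk⟩, rfl⟩
      · exact Submodule.subset_span ⟨Sum.inr ⟨k, hk⟩, rfl⟩
    · have hz : ∀ x : V, (J ^ s) x = 0 → (J ^ k) x = 0 := by
        intro x hx
        have e : k = (k - s) + s := by omega
        rw [e, pow_add, Module.End.mul_apply, hx, map_zero]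
      rw [hz v₁ hv, hz w₁ hw]
      exact ⟨Submodule.zero_mem W, Submodule.zero_mem W⟩
  -- splitting sums over the sum type
  have hsplit : ∀ c : (Fin s ⊕ Fin s) → ℝ,
      ∑ i, c i • f i =
      ∑ i : Fin s, (c (Sum.inl i) • (J ^ (i : ℕ)) v₁ + c (Sum.inr i) • (J ^ (i : ℕ)) w₁) := by
    intro c
    rw [Fintype.sum_sum_type, Finset.sum_add_distrib]
    rfl
  have hJsucc : ∀ (k : ℕ) (x : V), J ((J ^ k) x) = (J ^ (k + 1)) x := by
    intro k x
    rw [pow_succ']; rfl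
  -- Part 1: J-invariance
  have hinv : ∀ y ∈ W, J y ∈ W := by
    intro y hy
    refine Submodule.span_induction ?_ ?_ ?_ ?_ hy
    · rintro x ⟨i, rfl⟩
      rcases i with i | i
      · simpa [f, hJsucc] using (hgen ((i : ℕ) + 1)).1
      · simpa [f, hJsucc] using (hgen ((i : ℕ) + 1)).2
    · simpa using Submodule.zero_mem W
    · intro x y _ _ hx hy
      simpa [map_add] using Submodule.add_mem W hx hy
    · intro r x _ hx
      simpa [map_smul] using Submodule.smul_mem W r hx
  -- Part 2: linear independence
  have hli : LinearIndependent ℝ f := by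
    rw [Fintype.linearIndependent_iff]
    intro c hc
    rw [hsplit c] at hc
    have hzero : ∀ i, c (Sum.inl i) = 0 ∧ c (Sum.inr i) = 0 := by
      refine aux_kill B J hsymm hskew s hs hseven v₁ w₁ hv hw hpair _ _ ?_
      intro k hk
      rw [hc]
      simp
    intro i
    rcases i with i | i
    · exact (hzero i).1
    · exact (hzero i).2
  have hrank : Module.finrank ℝ W = 2 * s := by
    rw [hWf, finrank_span_eq_card hli]
    simp [two_mul]
  refine ⟨hinv, hrank, ?_⟩
  -- Part 3: nondegeneracy on W
  intro y hyW hy0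
  by_contra hcon
  push_neg at hcon
  obtain ⟨c, hc⟩ := (Submodule.mem_span_range_iff_exists_fun ℝ).mp hyW
  rw [hsplit c] at hc
  have hzero : ∀ i, c (Sum.inl i) = 0 ∧ c (Sum.inr i) = 0 := by
    refine aux_kill B J hsymm hskew s hs hseven v₁ w₁ hv hw hpair _ _ ?_
    intro k hk
    rw [hc]
    exact ⟨hcon _ (hgen k).1, hcon _ (hgen k).2⟩
  apply hy0
  rw [← hc]
  refine Finset.sum_eq_zero ?_
  intro i _
  rw [(hzero i).1, (hzero i).2, zero_smul, zero_smul, add_zero]
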